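/- In the module M̃ over L₁, for j < 0 and positive integers i_1, ..., i_s with i_1 + ⋯ + i_s + j > 0, one has e_{i_1} ⋯ e_{i_{s-1}} e_{i_s} f_j = (∏_{l=2}^{s} (i_l + ⋯ + i_s + j)) f_{j + i_1 + ⋯ + i_s}. -/

import Mathlib

/-!
Applying `e_{i_s}, …, e_{i_1}` in turn to `f_j` passes through the basis vectors `f_{m_l}`, where
`m_l = i_l + ⋯ + i_s + j` (so `m_{s+1} = j`), and `e_{i_l}` contributes the factor `m_{l+1}`
while `m_{l+1} ≥ 0`, the factor `m_l` while `m_l ≤ 0`, and the factor `1` at the single step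
where the index crosses from negative to positive. Either way each `m_l` with `2 ≤ l ≤ s` is
picked up exactly once.
-/

/-- The structure coefficient of the action of `e_i` on `f_j`: `e_i f_j = coeff i j • f_{i+j}`. -/
noncomputable def coeff (i : ℕ) (j : ℤ) : ℚ :=
  if 0 ≤ j then (j : ℚ) else if (i : ℤ) + j ≤ 0 then ((i : ℤ) + j : ℤ) else 1

/-- The action of `e_i` on the free module `ℤ →₀ ℚ` with basis `(f_j)_{j ∈ ℤ}`,
where `f_j = Finsupp.single j 1`. -/
noncomputable def act (i : ℕ) (v : ℤ →₀ ℚ) : ℤ →₀ ℚ :=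
  v.sum fun j c => (c * coeff i j) • Finsupp.single ((i : ℤ) + j) (1 : ℚ)

section Coeff

variable {i : ℕ} {m : ℤ}

lemma coeff_of_nonneg (hm : 0 ≤ m) : coeff i m = m := if_pos hm

lemma coeff_of_add_nonpos (h : (i : ℤ) + m ≤ 0) : coeff i m = ((i : ℤ) + m : ℤ) := by
  by_cases hm : 0 ≤ m
  · have hm0 : m = 0 := by omega
    have hi0 : (i : ℤ) = 0 := by omega
    rw [coeff_of_nonneg hm, hm0, hi0, add_zero]
  · rw [coeff, if_neg hm, if_pos h]

lemma coeff_of_neg_of_add_pos (hm : m < 0) (h : 0 < (i : ℤ) + m) : coeff i m = 1 := by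
  rw [coeff, if_neg hm.not_ge, if_neg h.not_ge]

end Coeff

lemma act_smul_single (i : ℕ) (c : ℚ) (m : ℤ) :
    act i (c • Finsupp.single m 1) = (c * coeff i m) • Finsupp.single ((i : ℤ) + m) 1 := by
  rw [Finsupp.smul_single, smul_eq_mul, mul_one, act, Finsupp.sum_single_index]
  simp

noncomputable def iterCoeff : List ℕ → ℤ → ℚ
  | [], _ => 1
  | i :: t, j => iterCoeff t j * coeff i (j + t.sum)

lemma foldr_act_single (L : List ℕ) (j : ℤ) :
    L.foldr act (Finsupp.single j 1) = iterCoeff L j • Finsupp.single (j + (L.sum : ℤ)) 1 := by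
  induction L with
  | nil => simp [iterCoeff]
  | cons i t ih =>
    rw [List.foldr_cons, ih, act_smul_single, iterCoeff, List.sum_cons]
    congr 2
    push_cast
    ring

noncomputable def suffixSumProd (L : List ℕ) (j : ℤ) : ℚ :=
  ∏ l ∈ Finset.range L.length, (((L.drop l).sum : ℚ) + j)

lemma suffixSumProd_nil (j : ℤ) : suffixSumProd [] j = 1 := rfl

lemma suffixSumProd_cons (i : ℕ) (t : List ℕ) (j : ℤ) :
    suffixSumProd (i :: t) j = (((i :: t).sum : ℚ) + j) * suffixSumProd t j := by
  rw [suffixSumProd, List.length_cons, Finset.prod_range_succ', List.drop_zero, mul_comm]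
  rfl

lemma prod_Icc_drop_eq_suffixSumProd_tail (L : List ℕ) (j : ℤ) :
    ∏ l ∈ Finset.Icc 1 (L.length - 1), (((L.drop l).sum : ℚ) + j) =
      suffixSumProd L.tail j := by
  rw [suffixSumProd, List.length_tail, ← Finset.Ico_add_one_right_eq_Icc,
    Finset.prod_Ico_eq_prod_range, Nat.add_sub_cancel]
  simp only [add_comm 1, List.drop_tail]

lemma iterCoeff_of_sum_add_nonpos {L : List ℕ} {j : ℤ} (h : (L.sum : ℤ) + j ≤ 0) :
    iterCoeff L j = suffixSumProd L j := by
  induction L with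
  | nil => rfl
  | cons i t ih =>
    rw [List.sum_cons, Nat.cast_add] at h
    rw [iterCoeff, ih (by omega), coeff_of_add_nonpos (by omega), suffixSumProd_cons, mul_comm,
      List.sum_cons]
    simp only [Int.cast_add, Int.cast_natCast, Nat.cast_add]
    ring

lemma iterCoeff_cons_of_neg_of_sum_add_pos {j : ℤ} (hj : j < 0) (i : ℕ) (t : List ℕ)
    (h : 0 < ((i :: t).sum : ℤ) + j) :
    iterCoeff (i :: t) j = suffixSumProd t j := by
  induction t generalizing i with
  | nil =>
    rw [List.sum_singleton] at h
    rw [iterCoeff, iterCoeff, List.sum_nil, Nat.cast_zero, add_zero,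
      coeff_of_neg_of_add_pos hj (by omega), one_mul, suffixSumProd_nil]
  | cons i' t ih =>
    have hsum_cons : ((i :: i' :: t).sum : ℤ) = i + (i' :: t).sum := by
      rw [List.sum_cons, Nat.cast_add]
    rw [iterCoeff, add_comm j]
    rcases lt_trichotomy (((i' :: t).sum : ℤ) + j) 0 with hneg | hzero | hpos
    · rw [coeff_of_neg_of_add_pos hneg (by omega), mul_one, iterCoeff_of_sum_add_nonpos hneg.le]
    · have hzero' : (((i' :: t).sum : ℚ) + j) = 0 := by
        simpa only [Int.cast_add, Int.cast_natCast, Int.cast_zero]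
          using congrArg (Int.cast : ℤ → ℚ) hzero
      rw [hzero, suffixSumProd_cons, hzero', coeff_of_nonneg le_rfl, Int.cast_zero, mul_zero,
        zero_mul]
    · rw [ih i' hpos, coeff_of_nonneg hpos.le, suffixSumProd_cons, mul_comm]
      simp only [Int.cast_add, Int.cast_natCast]

theorem iterated_action_formula_general (L : List ℕ)
    (j : ℤ) (hj : j < 0) (hsum : 0 < (L.sum : ℤ) + j) :
    List.foldr act (Finsupp.single j 1) L =
      (∏ l ∈ Finset.Icc 1 (L.length - 1), (((L.drop l).sum : ℚ) + (j : ℚ))) •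
        Finsupp.single (j + (L.sum : ℤ)) (1 : ℚ) := by
  cases L with
  | nil => simp at hsum; omega
  | cons i t =>
    rw [foldr_act_single, iterCoeff_cons_of_neg_of_sum_add_pos hj i t hsum,
      prod_Icc_drop_eq_suffixSumProd_tail, List.tail_cons]

/-- In `M̃`, for `j < 0` and positive integers `i_1, …, i_s` with `i_1 + ⋯ + i_s + j > 0`,
`e_{i_1} ⋯ e_{i_s} f_j = (∏_{l=2}^{s} (i_l + ⋯ + i_s + j)) f_{j + i_1 + ⋯ + i_s}`
(the factor for index `l` being the sum of the last `s - l + 1` entries plus `j`). -/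
theorem iterated_action_formula (L : List ℕ) (hL : ∀ x ∈ L, 1 ≤ x)
    (j : ℤ) (hj : j < 0) (hsum : 0 < (L.sum : ℤ) + j) :
    List.foldr act (Finsupp.single j 1) L =
      (∏ l ∈ Finset.Icc 1 (L.length - 1), (((L.drop l).sum : ℚ) + (j : ℚ))) •
        Finsupp.single (j + (L.sum : ℤ)) (1 : ℚ) :=
  iterated_action_formula_general L j hj hsum
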